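/- arXiv:1901.08065 — 3 statements merged into one kernel-verified Lean document; each statement's English description precedes it below -/
import Mathlib

section
/- Let B be a symmetric bilinear form of signature (1,n) on a real vector space V, and suppose J₀, J_μ, J_{μ'} ∈ V (interpreted as restrictions to a surface, i.e., via a trilinear symmetric form d with all values d(J_i,J_j,J_k) ≥ 0). If d(J₀,J₀,J₀) = 0, d(J₀,J₀,J_μ) = 0 for all μ in an index set M, and the restricted classes C_{μ,0} are nonzero with C_{μ,0}·C_{μ,0} ≥ 0 and C_{0,0} ≠ 0 on the surface S₀ (signature (1,k) pairing), then C_{μ,0} = n_μ C_{0,0} with n_μ ∈ ℝ, and consequently d(J₀, J_μ, J_{μ'}) = 0 for all μ, μ' ∈ M. -/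
/-!
In signature `(1, k)` a nonzero null vector `v` has `v 0 ≠ 0`, since a vector with vanishing
time component has `mink u u = -|tail u|² ≤ 0`, with equality only at `u = 0`. For `w` orthogonal
to `v` with `mink w w ≥ 0`, subtracting `(w 0 / v 0) • v` kills the time component without
changing `mink w w`, so the difference vanishes and `w ∥ v`. Hence every `res J_μ` is a multiple
of the null vector `res J₀`, and `d(J₀, J_μ, J_μ') = n_μ n_μ' d(J₀, J₀, J₀) = 0`.
-/

/-- The Minkowski-type symmetric bilinear form of signature `(1, k)` on `ℝ^{k+1}`. -/
def mink (k : ℕ) (v w : Fin (k + 1) → ℝ) : ℝ :=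
  v 0 * w 0 - ∑ i : Fin k, v i.succ * w i.succ

section

variable {k : ℕ}

lemma mink_comm (v w : Fin (k + 1) → ℝ) : mink k v w = mink k w v := by
  simp only [mink, mul_comm]

lemma mink_smul_left (c : ℝ) (v w : Fin (k + 1) → ℝ) : mink k (c • v) w = c * mink k v w := by
  simp only [mink, Pi.smul_apply, smul_eq_mul, mul_sub, Finset.mul_sum, mul_assoc]

lemma mink_smul_right (c : ℝ) (v w : Fin (k + 1) → ℝ) : mink k v (c • w) = c * mink k v w := by
  rw [mink_comm, mink_smul_left, mink_comm]

lemma mink_sub_left (u v w : Fin (k + 1) → ℝ) : mink k (u - v) w = mink k u w - mink k v w := by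
  simp only [mink, Pi.sub_apply, sub_mul, Finset.sum_sub_distrib]
  ring

lemma mink_sub_right (u v w : Fin (k + 1) → ℝ) : mink k u (v - w) = mink k u v - mink k u w := by
  rw [mink_comm, mink_sub_left, mink_comm, mink_comm w]

lemma eq_zero_of_head_eq_zero_of_mink_self_nonneg {u : Fin (k + 1) → ℝ} (hu0 : u 0 = 0)
    (hu : 0 ≤ mink k u u) : u = 0 := by
  have hsum : ∑ i : Fin k, u i.succ * u i.succ = 0 := by
    simp only [mink, hu0, zero_mul, zero_sub, neg_nonneg] at hu
    exact le_antisymm hu (Finset.sum_nonneg fun i _ => mul_self_nonneg _)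
  have htail : ∀ i : Fin k, u i.succ = 0 := fun i => mul_self_eq_zero.mp <|
    (Finset.sum_eq_zero_iff_of_nonneg fun j _ => mul_self_nonneg _).mp hsum i (Finset.mem_univ i)
  funext j
  cases j using Fin.cases with
  | zero => exact hu0
  | succ i => exact htail i

theorem exists_eq_smul_of_mink_isotropic {v w : Fin (k + 1) → ℝ} (hv0 : v ≠ 0)
    (hv : mink k v v = 0) (hvw : mink k v w = 0) (hw : 0 ≤ mink k w w) :
    ∃ c : ℝ, w = c • v := by
  have hv_head : v 0 ≠ 0 := fun h => hv0 (eq_zero_of_head_eq_zero_of_mink_self_nonneg h hv.ge)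
  set c := w 0 / v 0
  refine ⟨c, sub_eq_zero.mp (eq_zero_of_head_eq_zero_of_mink_self_nonneg ?_ ?_)⟩
  · simp [c, div_mul_cancel₀ _ hv_head]
  · have hwv : mink k w v = 0 := mink_comm v w ▸ hvw
    simpa [mink_sub_left, mink_sub_right, mink_smul_left, mink_smul_right, hv, hvw, hwv] using hw

end

theorem stmt_10_general (V : Type*)
    (M : Type*) (k : ℕ)
    (d : V → V → V → ℝ) (J₀ : V) (J : M → V)
    (res : V → (Fin (k + 1) → ℝ))
    (hcompat : ∀ X Y : V, mink k (res X) (res Y) = d J₀ X Y)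
    (h000 : d J₀ J₀ J₀ = 0)
    (h00μ : ∀ μ, d J₀ J₀ (J μ) = 0)
    (hres0 : res J₀ ≠ 0)
    (hnonneg : ∀ μ, 0 ≤ d J₀ (J μ) (J μ)) :
    (∀ μ, ∃ nμ : ℝ, res (J μ) = nμ • res J₀) ∧
      (∀ μ μ', d J₀ (J μ) (J μ') = 0) := by
  have hnull : mink k (res J₀) (res J₀) = 0 := (hcompat _ _).trans h000
  have hprop (μ : M) : ∃ nμ : ℝ, res (J μ) = nμ • res J₀ :=
    exists_eq_smul_of_mink_isotropic hres0 hnull ((hcompat _ _).trans (h00μ μ))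
      ((hcompat _ _).symm ▸ hnonneg μ)
  refine ⟨hprop, fun μ μ' => ?_⟩
  obtain ⟨n, hn⟩ := hprop μ
  obtain ⟨n', hn'⟩ := hprop μ'
  rw [← hcompat, hn, hn', mink_smul_left, mink_smul_right, hnull, mul_zero, mul_zero]

/-- Abstraction of Proposition 1 (Appendix D.1): with a triple intersection form `d`
and restriction `res` to a surface with signature-`(1,k)` pairing satisfying
`B(res X, res Y) = d(J₀,X,Y)`, the vanishings `d(J₀,J₀,J₀) = 0` and `d(J₀,J₀,J_μ) = 0`
together with `d(J₀,J_μ,J_μ) ≥ 0` force `res (J_μ)` proportional to `res J₀`, and hence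
`d(J₀,J_μ,J_{μ'}) = 0` for all `μ, μ'`. -/
theorem stmt_10 (V : Type*) [AddCommGroup V] [Module ℝ V]
    (M : Type*) (k : ℕ)
    (d : V → V → V → ℝ) (J₀ : V) (J : M → V)
    (res : V → (Fin (k + 1) → ℝ))
    (hcompat : ∀ X Y : V, mink k (res X) (res Y) = d J₀ X Y)
    (h000 : d J₀ J₀ J₀ = 0)
    (h00μ : ∀ μ, d J₀ J₀ (J μ) = 0)
    (hres0 : res J₀ ≠ 0)
    (hresμ : ∀ μ, res (J μ) ≠ 0)
    (hnonneg : ∀ μ, 0 ≤ d J₀ (J μ) (J μ)) :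
    (∀ μ, ∃ nμ : ℝ, res (J μ) = nμ • res J₀) ∧
      (∀ μ μ', d J₀ (J μ) (J μ') = 0) :=
  stmt_10_general V M k d J₀ J res hcompat h000 h00μ hres0 hnonneg
end

section
/- Consider the base B₃ = ℙ¹ × ℙ² with Kähler cone generated by j₀ (hyperplane of ℙ¹) and j₁ (hyperplane of ℙ²), intersection relations j₀² = 0, j₁³ = 0, j₀·j₁² = 1. For the Kähler form J = t·j₀ + (b/√t)·j₁, a divisor S = h₀ j₀ + h j₁ with h > 0, and the curve C₀ = j₀·j₁, one has: vol(B₃) = J³/6 = b²/2; vol(C₀) = J·C₀ = b/√t → 0 as t → ∞; vol(S) = J²·S/2 = √t·bh + b²h₀/(2t); and asymptotically vol(S)·vol(C₀) → b²h = 4m·vol(B₃), where m = (1/2) C₀·S = h/2. -/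
open Filter Topology

/- With `J = t j₀ + (b/√t) j₁` the factor `t` on `j₀` exactly cancels the `1/t` of `(b/√t)²`, so
`J³` is independent of `t`. The curve `C₀ = j₀·j₁` only sees the `j₁`-coefficient `b/√t`, while
`J²·S` is dominated by `2 t (b/√t) h = 2√t b h`; in the product of the two volumes the `√t` cancels,
and the remaining term decays like `t^(-3/2)`. -/

/-- The triple intersection form of `ℙ¹ × ℙ²` in the basis `(j₀, j₁)`:
the only nonvanishing triple product is `j₀·j₁·j₁ = 1`. -/
def trip (x y z : ℝ × ℝ) : ℝ :=
  x.1 * y.2 * z.2 + y.1 * x.2 * z.2 + z.1 * x.2 * y.2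

lemma trip_self_self_self (x : ℝ × ℝ) : trip x x x = 3 * x.1 * x.2 ^ 2 := by
  simp only [trip]; ring

lemma trip_self_self (x s : ℝ × ℝ) : trip x x s = 2 * x.1 * x.2 * s.2 + s.1 * x.2 ^ 2 := by
  simp only [trip]; ring

lemma trip_j₀_j₁ (x : ℝ × ℝ) : trip x (1, 0) (0, 1) = x.2 := by
  simp only [trip]; ring

lemma div_sqrt_sq (b : ℝ) {t : ℝ} (ht : 0 ≤ t) : (b / √t) ^ 2 = b ^ 2 / t := by
  rw [div_pow, Real.sq_sqrt ht]

lemma mul_div_sqrt (b t : ℝ) : t * (b / √t) = √t * b := by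
  rw [mul_div_left_comm, Real.div_sqrt, mul_comm]

lemma mul_div_sqrt_sq (b : ℝ) {t : ℝ} (ht : 0 < t) : t * (b / √t) ^ 2 = b ^ 2 := by
  rw [div_sqrt_sq b ht.le]; field_simp

lemma trip_kahler_divisor (b h₀ h : ℝ) {t : ℝ} (ht : 0 < t) :
    trip (t, b / √t) (t, b / √t) (h₀, h) / 2 = √t * b * h + b ^ 2 * h₀ / (2 * t) := by
  rw [trip_self_self, mul_assoc 2 t, mul_div_sqrt, div_sqrt_sq b ht.le]
  ring

lemma tendsto_vol_divisor_mul_vol_curve (b h₀ h : ℝ) :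
    Tendsto (fun t : ℝ => (√t * b * h + b ^ 2 * h₀ / (2 * t)) * (b / √t)) atTop
      (𝓝 (b ^ 2 * h)) := by
  have hdecay : Tendsto (fun t : ℝ => b ^ 3 * h₀ / 2 * (t * √t)⁻¹) atTop (𝓝 0) := by
    simpa using ((tendsto_id.atTop_mul_atTop₀ Real.tendsto_sqrt_atTop).inv_tendsto_atTop).const_mul
      (b ^ 3 * h₀ / 2)
  have hlim := hdecay.const_add (b ^ 2 * h)
  rw [add_zero] at hlim
  refine hlim.congr' ?_
  filter_upwards [eventually_gt_atTop 0] with t ht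
  have hsqrt : √t ≠ 0 := (Real.sqrt_pos.mpr ht).ne'
  field_simp

theorem stmt_14_general (b h₀ h : ℝ) :
    (∀ t : ℝ, 0 < t →
      trip (t, b / Real.sqrt t) (t, b / Real.sqrt t) (t, b / Real.sqrt t) / 6 = b ^ 2 / 2) ∧
    (∀ t : ℝ, 0 < t →
      trip (t, b / Real.sqrt t) (1, 0) (0, 1) = b / Real.sqrt t) ∧
    Tendsto (fun t : ℝ => trip (t, b / Real.sqrt t) (1, 0) (0, 1)) atTop (nhds 0) ∧
    (∀ t : ℝ, 0 < t →
      trip (t, b / Real.sqrt t) (t, b / Real.sqrt t) (h₀, h) / 2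
        = Real.sqrt t * b * h + b ^ 2 * h₀ / (2 * t)) ∧
    Tendsto (fun t : ℝ =>
        trip (t, b / Real.sqrt t) (t, b / Real.sqrt t) (h₀, h) / 2 *
          trip (t, b / Real.sqrt t) (1, 0) (0, 1)) atTop (nhds (b ^ 2 * h)) ∧
    trip (h₀, h) (1, 0) (0, 1) / 2 = h / 2 ∧
    b ^ 2 * h = 4 * (h / 2) * (b ^ 2 / 2) := by
  refine ⟨fun t ht => ?_, fun t _ => trip_j₀_j₁ _, ?_, fun t ht => trip_kahler_divisor b h₀ h ht,
    ?_, by rw [trip_j₀_j₁], by ring⟩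
  · rw [trip_self_self_self, mul_assoc 3, mul_div_sqrt_sq b ht]
    ring
  · simpa only [trip_j₀_j₁] using tendsto_const_nhds.div_atTop Real.tendsto_sqrt_atTop
  · refine (tendsto_vol_divisor_mul_vol_curve b h₀ h).congr' ?_
    filter_upwards [eventually_gt_atTop 0] with t ht
    rw [trip_kahler_divisor b h₀ h ht, trip_j₀_j₁]

/-- Type B example on `B₃ = ℙ¹ × ℙ²` (Appendix E.2): with `J = t j₀ + (b/√t) j₁`,
`S = h₀ j₀ + h j₁`, `C₀ = j₀·j₁`, one has `vol(B₃) = b²/2`, `vol(C₀) = b/√t → 0`,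
`vol(S) = √t·bh + b²h₀/(2t)`, and `vol(S)·vol(C₀) → b²h = 4m·vol(B₃)` with `m = h/2`. -/
theorem stmt_14 (b h₀ h : ℝ) (hb : 0 < b) (hh : 0 < h) :
    (∀ t : ℝ, 0 < t →
      trip (t, b / Real.sqrt t) (t, b / Real.sqrt t) (t, b / Real.sqrt t) / 6 = b ^ 2 / 2) ∧
    (∀ t : ℝ, 0 < t →
      trip (t, b / Real.sqrt t) (1, 0) (0, 1) = b / Real.sqrt t) ∧
    Tendsto (fun t : ℝ => trip (t, b / Real.sqrt t) (1, 0) (0, 1)) atTop (nhds 0) ∧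
    (∀ t : ℝ, 0 < t →
      trip (t, b / Real.sqrt t) (t, b / Real.sqrt t) (h₀, h) / 2
        = Real.sqrt t * b * h + b ^ 2 * h₀ / (2 * t)) ∧
    Tendsto (fun t : ℝ =>
        trip (t, b / Real.sqrt t) (t, b / Real.sqrt t) (h₀, h) / 2 *
          trip (t, b / Real.sqrt t) (1, 0) (0, 1)) atTop (nhds (b ^ 2 * h)) ∧
    trip (h₀, h) (1, 0) (0, 1) / 2 = h / 2 ∧
    b ^ 2 * h = 4 * (h / 2) * (b ^ 2 / 2) :=
  stmt_14_general b h₀ h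
end

section
/- Let d be a symmetric trilinear form with nonnegative values on a finite set of generators {J₀, J_ν (ν ∈ I₁), J_r (r ∈ I₃)} satisfying: d(J₀,J₀,J₀) = 0; d(J₀,J₀,J_ν) ≥ 1 for all ν ∈ I₁; J₀·J_r = n_r·(J₀·J₀) as 2-cycle classes with n_r > 0; J_r·J_s = n_{rs}·(J₀·J₀) with n_{rs} ≥ 0; and d(J_r,J_s,J_t) = 0 for all r,s,t ∈ I₃. Then for the family of Kähler forms J = t J₀ + Σ_ν (a_ν/t²) J_ν + Σ_r c_r J_r with a_ν, c_r ≥ 0 and a_ν, c_r/t bounded as t → ∞: vol(B₃) = J³/6 converges to Σ_ν a_ν d(J₀,J₀,J_ν)·(1/2 + n_r ĉ_r + (1/2) n_{rs} ĉ_r ĉ_s) where ĉ_r = lim c_r/t, and for S = h₀ J₀ + Σ h_ν J_ν + Σ h_r J_r one has lim_{t→∞} vol(S)·vol(C₀) = 2m·lim vol(B₃) with C₀ = J₀·J₀, m = (1/2)Σ_ν h_ν d(J₀,J₀,J_ν). -/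
open Filter

set_option maxHeartbeats 2000000

/-- Asymptotic volume relation of Appendix D.1 (eq. (6.12)/(D.38)): for the family of
Kähler forms `J(t) = t J₀ + Σ_ν (a_ν/t²) J_ν + Σ_r c_r(t) J_r` with `c_r(t)/t → ĉ_r`,
given the algebraic relations among the triple intersections, `vol(B₃) = J³/6` converges
to `L = (Σ_ν a_ν d_{00ν})(1/2 + Σ_r n_r ĉ_r + (1/2) Σ_{r,s} n_{rs} ĉ_r ĉ_s)`, and
`vol(S)·vol(C₀) → 2m·L` with `C₀ = J₀·J₀` and `m = (1/2) Σ_ν h_ν d_{00ν}`. -/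
theorem stmt_16 (V : Type*) [AddCommGroup V] [Module ℝ V]
    (d : V →ₗ[ℝ] V →ₗ[ℝ] V →ₗ[ℝ] ℝ)
    (hsym1 : ∀ x y z : V, d x y z = d y x z) (hsym2 : ∀ x y z : V, d x y z = d x z y)
    (I1 I3 : Type*) [Fintype I1] [Fintype I3]
    (J₀ : V) (Jν : I1 → V) (Jr : I3 → V)
    (n : I3 → ℝ) (nrs : I3 → I3 → ℝ)
    (hn : ∀ r, 0 < n r) (hnrs : ∀ r s, 0 ≤ nrs r s)
    (hd000 : d J₀ J₀ J₀ = 0)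
    (he : ∀ ν, 1 ≤ d J₀ J₀ (Jν ν))
    (h00r : ∀ r, d J₀ J₀ (Jr r) = 0)
    (h0rν : ∀ r ν, d J₀ (Jr r) (Jν ν) = n r * d J₀ J₀ (Jν ν))
    (h0rs : ∀ r s, d J₀ (Jr r) (Jr s) = 0)
    (hrsν : ∀ r s ν, d (Jr r) (Jr s) (Jν ν) = nrs r s * d J₀ J₀ (Jν ν))
    (hrst : ∀ r s u, d (Jr r) (Jr s) (Jr u) = 0)
    (a : I1 → ℝ) (ha : ∀ ν, 0 ≤ a ν)
    (c : ℝ → I3 → ℝ) (hc : ∀ t r, 0 ≤ c t r)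
    (chat : I3 → ℝ)
    (hchat : ∀ r, Tendsto (fun t : ℝ => c t r / t) atTop (nhds (chat r)))
    (h₀ : ℝ) (hν : I1 → ℝ) (hr : I3 → ℝ)
    (J : ℝ → V)
    (hJ : ∀ t : ℝ, J t = t • J₀ + ∑ ν, (a ν / t ^ 2) • Jν ν + ∑ r, c t r • Jr r)
    (S : V)
    (hS : S = h₀ • J₀ + ∑ ν, hν ν • Jν ν + ∑ r, hr r • Jr r)
    (m L : ℝ)
    (hm : m = (1 / 2) * ∑ ν, hν ν * d J₀ J₀ (Jν ν))
    (hL : L = (∑ ν, a ν * d J₀ J₀ (Jν ν)) *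
      (1 / 2 + ∑ r, n r * chat r + (1 / 2) * ∑ r, ∑ s, nrs r s * chat r * chat s)) :
    Tendsto (fun t : ℝ => d (J t) (J t) (J t) / 6) atTop (nhds L) ∧
      Tendsto (fun t : ℝ => (d (J t) (J t) S / 2) * d (J t) J₀ J₀) atTop (nhds (2 * m * L)) := by
  -- symmetry helpers
  have sy1 : ∀ x y z : V, d y x z = d x y z := fun x y z => (hsym1 x y z).symm
  have sy2 : ∀ x y z : V, d x z y = d x y z := fun x y z => (hsym2 x y z).symm
  have cyc : ∀ x y z : V, d z x y = d x y z := by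
    intro x y z; rw [hsym1 z x y]; exact (hsym2 x y z).symm
  have cyc2 : ∀ x y z : V, d y z x = d x y z := fun x y z => (cyc y z x).symm
  have sy13 : ∀ x y z : V, d z y x = d x y z := fun x y z =>
    (sy1 y z x).trans (cyc2 x y z)
  have tri : ∀ x y z : V, d (x + y + z) (x + y + z) (x + y + z) =
      d x x x + d y y y + d z z z + 3 * d x x y + 3 * d x x z + 3 * d x y y +
        3 * d y y z + 3 * d x z z + 3 * d y z z + 6 * d x y z := by
    intro x y z
    simp only [map_add, LinearMap.add_apply]
    linear_combination sy2 x x y + cyc x x y + sy2 x x z + cyc x x z + sy1 x y y +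
      cyc2 x y y + sy2 y y z + cyc y y z + sy1 x z z + cyc2 x z z + sy1 y z z +
      cyc2 y z z + sy2 x y z + sy1 x y z + cyc2 x y z + cyc x y z + sy13 x y z
  have tri2 : ∀ x y z w : V, d (x + y + z) (x + y + z) w =
      d x x w + d y y w + d z z w + 2 * d x y w + 2 * d x z w + 2 * d y z w := by
    intro x y z w
    simp only [map_add, LinearMap.add_apply]
    linear_combination sy1 x y w + sy1 x z w + sy1 y z w
  -- abbreviations
  set B₁ : V := ∑ ν, a ν • Jν ν with hB₁
  set Ct : ℝ → V := fun t => ∑ r, c t r • Jr r with hCt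
  set A1 : ℝ := ∑ ν, a ν * d J₀ J₀ (Jν ν) with hA1
  set H : ℝ := ∑ ν, hν ν * d J₀ J₀ (Jν ν) with hH
  -- permuted basic relations
  have h0νr : ∀ ν r, d J₀ (Jν ν) (Jr r) = n r * d J₀ J₀ (Jν ν) := by
    intro ν r; rw [sy2]; exact h0rν r ν
  have hνrs : ∀ ν r s, d (Jν ν) (Jr r) (Jr s) = nrs r s * d J₀ J₀ (Jν ν) := by
    intro ν r s; rw [cyc (Jr r) (Jr s) (Jν ν)]; exact hrsν r s ν
  have hr0 : ∀ r, d J₀ (Jr r) J₀ = 0 := by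
    intro r; rw [sy2]; exact h00r r
  have hrs0 : ∀ r s, d (Jr r) (Jr s) J₀ = 0 := by
    intro r s; rw [cyc2]; exact h0rs r s
  have hkey1 : ∀ r, (∑ ν, a ν * (n r * d J₀ J₀ (Jν ν))) = n r * A1 := by
    intro r; rw [hA1, Finset.mul_sum]
    exact Finset.sum_congr rfl fun ν _ => by ring
  have hkey2 : ∀ r s, (∑ ν, a ν * (nrs r s * d J₀ J₀ (Jν ν))) = nrs r s * A1 := by
    intro r s; rw [hA1, Finset.mul_sum]
    exact Finset.sum_congr rfl fun ν _ => by ring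
  -- value lemmas
  have v1 : d J₀ J₀ B₁ = A1 := by
    rw [hB₁, hA1, map_sum]
    simp [map_smul, smul_eq_mul]
  have v2 : ∀ t, d J₀ J₀ (Ct t) = 0 := by
    intro t
    simp [hCt, map_sum, map_smul, smul_eq_mul, h00r]
  have v3 : ∀ t, d J₀ B₁ (Ct t) = A1 * ∑ r, n r * c t r := by
    intro t
    simp only [hB₁, hCt, map_sum, LinearMap.sum_apply, map_smul,
      LinearMap.smul_apply, smul_eq_mul, h0νr, hkey1]
    rw [Finset.mul_sum]
    exact Finset.sum_congr rfl fun r _ => by ring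
  have v4 : ∀ t, d J₀ (Ct t) (Ct t) = 0 := by
    intro t
    simp [hCt, map_sum, LinearMap.sum_apply, map_smul, LinearMap.smul_apply,
      smul_eq_mul, h0rs]
  have v5 : ∀ t, d B₁ (Ct t) (Ct t) = A1 * ∑ r, ∑ s, nrs r s * c t r * c t s := by
    intro t
    simp only [hB₁, hCt, map_sum, LinearMap.sum_apply, map_smul,
      LinearMap.smul_apply, smul_eq_mul, hνrs, hkey2]
    simp only [Finset.mul_sum]
    rw [Finset.sum_comm]
    exact Finset.sum_congr rfl fun r _ => Finset.sum_congr rfl fun s _ => by ring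
  have v6 : ∀ t, d (Ct t) (Ct t) (Ct t) = 0 := by
    intro t
    simp [hCt, map_sum, LinearMap.sum_apply, map_smul, LinearMap.smul_apply,
      smul_eq_mul, hrst]
  have v7 : ∀ t, d B₁ B₁ (Ct t) = ∑ r, c t r * d B₁ B₁ (Jr r) := by
    intro t
    simp only [hCt, map_sum, map_smul, smul_eq_mul]
  have v8 : d J₀ J₀ S = H := by
    rw [hS, hH]
    simp [map_add, map_sum, map_smul, smul_eq_mul, hd000, h00r]
  have vB00 : d B₁ J₀ J₀ = A1 := by rw [cyc J₀ J₀ B₁]; exact v1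
  have vC00 : ∀ t, d (Ct t) J₀ J₀ = 0 := by
    intro t; rw [cyc J₀ J₀ (Ct t)]; exact v2 t
  have vrS : ∀ r, d J₀ (Jr r) S = n r * H := by
    intro r
    rw [hS, hH]
    simp only [map_add, map_sum, map_smul, smul_eq_mul, hr0, h0rν, h0rs,
      mul_zero, zero_add, add_zero, Finset.sum_const_zero]
    rw [Finset.mul_sum]
    exact Finset.sum_congr rfl fun ν _ => by ring
  have v9 : ∀ t, d J₀ (Ct t) S = H * ∑ r, n r * c t r := by
    intro t
    simp only [hCt, map_sum, LinearMap.sum_apply, map_smul, LinearMap.smul_apply,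
      smul_eq_mul, vrS]
    rw [Finset.mul_sum]
    exact Finset.sum_congr rfl fun r _ => by ring
  have vrsS : ∀ r s, d (Jr r) (Jr s) S = nrs r s * H := by
    intro r s
    rw [hS, hH]
    simp only [map_add, map_sum, map_smul, smul_eq_mul, hrs0, hrsν, hrst,
      mul_zero, zero_add, add_zero, Finset.sum_const_zero]
    rw [Finset.mul_sum]
    exact Finset.sum_congr rfl fun ν _ => by ring
  have v10 : ∀ t, d (Ct t) (Ct t) S = H * ∑ r, ∑ s, nrs r s * c t r * c t s := by
    intro t
    simp only [hCt, map_sum, LinearMap.sum_apply, map_smul, LinearMap.smul_apply,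
      smul_eq_mul, vrsS]
    simp only [Finset.mul_sum]
    rw [Finset.sum_comm]
    exact Finset.sum_congr rfl fun r _ => Finset.sum_congr rfl fun s _ => by ring
  have v11 : ∀ t, d B₁ (Ct t) S = ∑ r, c t r * d B₁ (Jr r) S := by
    intro t
    simp only [hCt, map_sum, LinearMap.sum_apply, map_smul, LinearMap.smul_apply,
      smul_eq_mul]
  have hJ' : ∀ t : ℝ, J t = t • J₀ + (t ^ 2)⁻¹ • B₁ + Ct t := by
    intro t
    rw [hJ t, hB₁]
    simp only [hCt, Finset.smul_sum, smul_smul]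
    congr 2
    refine Finset.sum_congr rfl fun ν _ => ?_
    rw [div_eq_inv_mul]
  have s1 : ∀ t : ℝ, (∑ r, n r * (c t r / t)) = (∑ r, n r * c t r) / t := by
    intro t; rw [Finset.sum_div]
    exact Finset.sum_congr rfl fun r _ => by ring
  have s2 : ∀ t : ℝ, (∑ r, ∑ s, nrs r s * (c t r / t) * (c t s / t)) =
      (∑ r, ∑ s, nrs r s * c t r * c t s) / t ^ 2 := by
    intro t; rw [Finset.sum_div]
    refine Finset.sum_congr rfl fun r _ => ?_
    rw [Finset.sum_div]
    exact Finset.sum_congr rfl fun s _ => by ring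
  have s3 : ∀ (t : ℝ) (g : I3 → ℝ), (∑ r, (c t r / t) * g r) = (∑ r, c t r * g r) / t := by
    intro t g; rw [Finset.sum_div]
    exact Finset.sum_congr rfl fun r _ => by ring
  have key1 : ∀ t : ℝ, 1 ≤ t → d (J t) (J t) (J t) / 6 =
      A1 / 2 + A1 * (∑ r, n r * (c t r / t)) +
        A1 / 2 * (∑ r, ∑ s, nrs r s * (c t r / t) * (c t s / t)) +
        d J₀ B₁ B₁ / 2 * t⁻¹ ^ 3 +
        (∑ r, (c t r / t) * d B₁ B₁ (Jr r)) / 2 * t⁻¹ ^ 3 +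
        d B₁ B₁ B₁ / 6 * t⁻¹ ^ 6 := by
    intro t ht
    have ht0 : t ≠ 0 := by positivity
    rw [hJ' t, tri]
    simp only [map_smul, LinearMap.smul_apply, smul_eq_mul, hd000, v1, v2, v3, v4,
      v5, v6, v7]
    rw [s1, s2, s3]
    field_simp
    ring
  have key2 : ∀ t : ℝ, 1 ≤ t → (d (J t) (J t) S / 2) * d (J t) J₀ J₀ =
      A1 * H / 2 * (1 + 2 * (∑ r, n r * (c t r / t)) +
        (∑ r, ∑ s, nrs r s * (c t r / t) * (c t s / t))) +
        A1 * d J₀ B₁ S * t⁻¹ ^ 3 + A1 * d B₁ B₁ S / 2 * t⁻¹ ^ 6 +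
        A1 * ((∑ r, (c t r / t) * d B₁ (Jr r) S) * t⁻¹ ^ 3) := by
    intro t ht
    have ht0 : t ≠ 0 := by positivity
    rw [hJ' t, tri2]
    simp only [map_add, LinearMap.add_apply, map_smul, LinearMap.smul_apply,
      smul_eq_mul, hd000, v8, v9, v10, v11, vB00, vC00]
    rw [s1, s2, s3]
    field_simp
    ring
  -- limits
  have linv : Tendsto (fun t : ℝ => t⁻¹) atTop (nhds 0) := tendsto_inv_atTop_zero
  have h03 : (0 : ℝ) ^ 3 = 0 := by norm_num
  have h06 : (0 : ℝ) ^ 6 = 0 := by norm_num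
  have linv3 : Tendsto (fun t : ℝ => t⁻¹ ^ 3) atTop (nhds 0) := h03 ▸ linv.pow 3
  have linv6 : Tendsto (fun t : ℝ => t⁻¹ ^ 6) atTop (nhds 0) := h06 ▸ linv.pow 6
  have l1 : Tendsto (fun t : ℝ => ∑ r, n r * (c t r / t)) atTop
      (nhds (∑ r, n r * chat r)) :=
    tendsto_finset_sum _ fun r _ => (hchat r).const_mul _
  have l2 : Tendsto (fun t : ℝ => ∑ r, ∑ s, nrs r s * (c t r / t) * (c t s / t)) atTop
      (nhds (∑ r, ∑ s, nrs r s * chat r * chat s)) :=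
    tendsto_finset_sum _ fun r _ => tendsto_finset_sum _ fun s _ =>
      ((hchat r).const_mul _).mul (hchat s)
  have l3 : Tendsto (fun t : ℝ => ∑ r, (c t r / t) * d B₁ B₁ (Jr r)) atTop
      (nhds (∑ r, chat r * d B₁ B₁ (Jr r))) :=
    tendsto_finset_sum _ fun r _ => (hchat r).mul_const _
  have l4 : Tendsto (fun t : ℝ => ∑ r, (c t r / t) * d B₁ (Jr r) S) atTop
      (nhds (∑ r, chat r * d B₁ (Jr r) S)) :=
    tendsto_finset_sum _ fun r _ => (hchat r).mul_const _
  constructor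
  · have base : Tendsto (fun t : ℝ => A1 / 2 + A1 * (∑ r, n r * (c t r / t)) +
        A1 / 2 * (∑ r, ∑ s, nrs r s * (c t r / t) * (c t s / t)) +
        d J₀ B₁ B₁ / 2 * t⁻¹ ^ 3 +
        (∑ r, (c t r / t) * d B₁ B₁ (Jr r)) / 2 * t⁻¹ ^ 3 +
        d B₁ B₁ B₁ / 6 * t⁻¹ ^ 6) atTop
        (nhds (A1 / 2 + A1 * (∑ r, n r * chat r) +
          A1 / 2 * (∑ r, ∑ s, nrs r s * chat r * chat s) +
          d J₀ B₁ B₁ / 2 * 0 + (∑ r, chat r * d B₁ B₁ (Jr r)) / 2 * 0 +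
          d B₁ B₁ B₁ / 6 * 0)) :=
      ((((tendsto_const_nhds.add (l1.const_mul A1)).add
        (l2.const_mul (A1 / 2))).add (linv3.const_mul _)).add
        ((l3.div_const 2).mul linv3)).add (linv6.const_mul _)
    have heq : A1 / 2 + A1 * (∑ r, n r * chat r) +
        A1 / 2 * (∑ r, ∑ s, nrs r s * chat r * chat s) +
        d J₀ B₁ B₁ / 2 * 0 + (∑ r, chat r * d B₁ B₁ (Jr r)) / 2 * 0 +
        d B₁ B₁ B₁ / 6 * 0 = L := by rw [hL]; ring
    rw [heq] at base
    exact base.congr' (((eventually_ge_atTop 1).mono fun t ht => (key1 t ht).symm))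
  · have base : Tendsto (fun t : ℝ => A1 * H / 2 * (1 + 2 * (∑ r, n r * (c t r / t)) +
        (∑ r, ∑ s, nrs r s * (c t r / t) * (c t s / t))) +
        A1 * d J₀ B₁ S * t⁻¹ ^ 3 + A1 * d B₁ B₁ S / 2 * t⁻¹ ^ 6 +
        A1 * ((∑ r, (c t r / t) * d B₁ (Jr r) S) * t⁻¹ ^ 3)) atTop
        (nhds (A1 * H / 2 * (1 + 2 * (∑ r, n r * chat r) +
          (∑ r, ∑ s, nrs r s * chat r * chat s)) +
          A1 * d J₀ B₁ S * 0 + A1 * d B₁ B₁ S / 2 * 0 +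
          A1 * ((∑ r, chat r * d B₁ (Jr r) S) * 0))) :=
      (((((tendsto_const_nhds.add (l1.const_mul 2)).add l2).const_mul
        (A1 * H / 2)).add (linv3.const_mul _)).add (linv6.const_mul _)).add
        ((l4.mul linv3).const_mul A1)
    have heq : A1 * H / 2 * (1 + 2 * (∑ r, n r * chat r) +
        (∑ r, ∑ s, nrs r s * chat r * chat s)) +
        A1 * d J₀ B₁ S * 0 + A1 * d B₁ B₁ S / 2 * 0 +
        A1 * ((∑ r, chat r * d B₁ (Jr r) S) * 0) = 2 * m * L := by
      rw [hm, hL]; ring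
    rw [heq] at base
    exact base.congr' (((eventually_ge_atTop 1).mono fun t ht => (key2 t ht).symm))
end
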